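/- arXiv:0902.3977 — 2 statements merged into one kernel-verified Lean document; each statement's English description precedes it below -/
import Mathlib

section
/- Closed-form formula for the leave-p-out estimator of the risk of a regressogram (Theorem 1): let n ≥ 2, let Λ be a partition of {1,…,n} into blocks λ with n_λ := card(λ) ≥ 2, and let p be an integer with 1 ≤ p < min_λ n_λ. Let Y_1,…,Y_n be arbitrary real numbers and, for each block λ, set S_{λ,1} := Σ_{i∈λ} Y_i and S_{λ,2} := Σ_{i∈λ} Y_i². For a training set I_t ⊆ {1,…,n} of cardinality n−p, let ŝ^{I_t} be defined on indices by: ŝ^{I_t}(j) is the mean of {Y_i : i ∈ I_t, i in the same block as j} (this set is nonempty because p < n_λ). Define the leave-p-out estimator R̂_p := C(n,p)^{-1} Σ_{I_t ⊆ {1,…,n}, card(I_t)=n−p} p^{-1} Σ_{j∉I_t} (Y_j − ŝ^{I_t}(j))². For each block λ and k ∈ {−1,0,1}, set V_λ(k) := Σ_{r≥1} r^k · C(n−p, r)·C(p, n_λ−r) / C(n, n_λ) (binomial coefficients being zero outside their range), A_λ := V_λ(0)·(1 − 1/n_λ) − V_λ(1)/n_λ + V_λ(−1), and B_λ := V_λ(1)·(2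 − 1_{n_λ≥3})/(n_λ(n_λ−1)) + (V_λ(0)/(n_λ−1))·((1 + 1/n_λ)·1_{n_λ≥3} − 2) − V_λ(−1)·1_{n_λ≥3}/(n_λ−1). Then R̂_p = Σ_{λ∈Λ} p^{-1} [ (A_λ − B_λ)·S_{λ,2} + B_λ·S_{λ,1}² ]. -/
/-!
Splitting the validation error by blocks, each block `s` with `k` elements contributes separately.
A training set `It` enters only through its trace `J = It ∩ s`, and each `r`-subset of `s` is the
trace of `C(N - k, N - p - r)` training sets; by the symmetry of the hypergeometric law, this count
times `C(k, r)` is `C(N, p)` times the probability that `#(It ∩ s) = r`. The first and second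
moments of `∑_{i ∈ J} Y i` over the `r`-subsets `J` of `s` give the summed held-out squared error
`C(k, r) (k - r)(r + 1) / (r k (k - 1)) (k S₂ - S₁²)`. Finally `A_λ = (k - 1) Q` and `B_λ = -Q`,
where `Q` is the hypergeometric average of `(k - r)(r + 1) / (r k (k - 1))`, so both sides equal
`C(N, p) Q (k S₂ - S₁²)` block by block.
-/

open Finset

namespace LpoClosedForm

variable {n : ℕ} {ι : Type*} [Fintype ι] [DecidableEq ι]

/-- The block (fiber) of the partition `c` with label `b`. -/
def blockOf (c : Fin n → ι) (b : ι) : Finset (Fin n) :=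
  Finset.univ.filter (fun i => c i = b)

/-- Prediction of the regressogram trained on `It` at the index `j`: the mean of the
training values `Y i` for `i ∈ It` lying in the same block as `j`. -/
noncomputable def pred (c : Fin n → ι) (Y : Fin n → ℝ) (It : Finset (Fin n)) (j : Fin n) : ℝ :=
  (∑ i ∈ It.filter (fun i => c i = c j), Y i) /
    ((It.filter (fun i => c i = c j)).card : ℝ)

/-- The leave-`p`-out estimator of the risk of the regressogram associated with the
partition `c`: average over all training sets `It` of cardinality `n − p` of the mean
squared prediction error on the validation set `{1,…,n} ∖ It`. -/
noncomputable def lpoRisk (c : Fin n → ι) (Y : Fin n → ℝ) (p : ℕ) : ℝ :=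
  ((n.choose p : ℝ))⁻¹ *
    ∑ It ∈ Finset.powersetCard (n - p) (Finset.univ : Finset (Fin n)),
      (p : ℝ)⁻¹ * ∑ j ∈ Finset.univ \ It, (Y j - pred c Y It j) ^ 2

/-- `V_λ(k) = ∑_{r ≥ 1} r^k C(n−p, r) C(p, n_λ−r) / C(n, n_λ)`, binomial coefficients
being zero outside their range (all terms with `r > n` vanish). -/
noncomputable def Vcoef (n p nl : ℕ) (k : ℤ) : ℝ :=
  ∑ r ∈ Finset.Icc 1 n,
    (r : ℝ) ^ k * ((n - p).choose r : ℝ) *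
      (if r ≤ nl then ((p.choose (nl - r)) : ℝ) else 0) / ((n.choose nl) : ℝ)

/-- `A_λ = V_λ(0)(1 − 1/n_λ) − V_λ(1)/n_λ + V_λ(−1)`. -/
noncomputable def Acoef (n p nl : ℕ) : ℝ :=
  Vcoef n p nl 0 * (1 - 1 / (nl : ℝ)) - Vcoef n p nl 1 / (nl : ℝ) + Vcoef n p nl (-1)

/-- `B_λ = V_λ(1)(2 − 1_{n_λ≥3})/(n_λ(n_λ−1)) + (V_λ(0)/(n_λ−1))((1 + 1/n_λ)1_{n_λ≥3} − 2)
          − V_λ(−1)·1_{n_λ≥3}/(n_λ−1)`. -/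
noncomputable def Bcoef (n p nl : ℕ) : ℝ :=
  Vcoef n p nl 1 * (2 - if 3 ≤ nl then (1 : ℝ) else 0) / ((nl : ℝ) * ((nl : ℝ) - 1))
    + Vcoef n p nl 0 / ((nl : ℝ) - 1) *
        ((1 + 1 / (nl : ℝ)) * (if 3 ≤ nl then (1 : ℝ) else 0) - 2)
    - Vcoef n p nl (-1) * (if 3 ≤ nl then (1 : ℝ) else 0) / ((nl : ℝ) - 1)

theorem choose_mul_choose_sub_comm (N a b : ℕ) :
    N.choose a * (N - a).choose b = N.choose b * (N - b).choose a := by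
  have ha := Nat.choose_mul (n := N) (Nat.le_add_right a b)
  have hb := Nat.choose_mul (n := N) (Nat.le_add_left b a)
  rw [Nat.add_sub_cancel_left] at ha
  rw [Nat.add_sub_cancel] at hb
  rw [← ha, ← hb, Nat.choose_symm_add]

theorem choose_mul_choose_mul_choose_sub_comm {n k m r : ℕ} (hrk : r ≤ k) (hrm : r ≤ m) :
    n.choose k * k.choose r * (n - k).choose (m - r)
      = n.choose m * m.choose r * (n - m).choose (k - r) := by
  rw [Nat.choose_mul hrk, Nat.choose_mul hrm, mul_assoc, mul_assoc,
    show n - k = n - r - (k - r) by omega, show n - m = n - r - (m - r) by omega,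
    choose_mul_choose_sub_comm]

section Subsets

variable {α : Type*} [DecidableEq α]

theorem cast_card_filter_powersetCard_subset {s T : Finset α} (hT : T ⊆ s) (r : ℕ) :
    (#{J ∈ powersetCard r s | T ⊆ J} : ℝ)
      = ((#s).choose r * r.choose #T : ℕ) / (#s).choose #T := by
  have hTs : ((#s).choose #T : ℝ) ≠ 0 := by
    exact_mod_cast (Nat.choose_pos (card_le_card hT)).ne'
  rw [eq_div_iff hTs]
  norm_cast
  rcases le_or_gt #T r with hTr | hrT
  · rw [card_filter_powersetCard_subset T s r hT hTr, mul_comm, Nat.choose_mul hTr]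
  · rw [Nat.choose_eq_zero_of_lt hrT, mul_zero, Nat.mul_eq_zero, card_eq_zero]
    refine Or.inl (filter_eq_empty_iff.2 fun J hJ hTJ => ?_)
    exact absurd (card_le_card hTJ) (by rw [(mem_powersetCard.1 hJ).2]; omega)

theorem sum_powersetCard_sum_filter_subset {β : Type*} (s : Finset α) (r : ℕ) (X : Finset β)
    (T : β → Finset α) (g : β → ℝ) :
    ∑ J ∈ powersetCard r s, ∑ x ∈ X with T x ⊆ J, g x
      = ∑ x ∈ X, (#{J ∈ powersetCard r s | T x ⊆ J} : ℝ) * g x := by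
  simp_rw [sum_filter]
  rw [sum_comm]
  refine sum_congr rfl fun x _ => ?_
  rw [← sum_filter, sum_const, nsmul_eq_mul]

theorem sum_powersetCard_sum (s : Finset α) (r : ℕ) (f : α → ℝ) :
    ∑ J ∈ powersetCard r s, ∑ i ∈ J, f i = (#s).choose r * r / #s * ∑ i ∈ s, f i := by
  have hfilter : ∀ J ∈ powersetCard r s, ({i ∈ s | {i} ⊆ J} : Finset α) = J := fun J hJ => by
    rw [filter_congr fun i _ => singleton_subset_iff, filter_mem_eq_inter,
      inter_eq_right.2 (mem_powersetCard.1 hJ).1]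
  rw [← sum_congr rfl fun J hJ => congrArg (∑ i ∈ ·, f i) (hfilter J hJ),
    sum_powersetCard_sum_filter_subset, mul_sum]
  refine sum_congr rfl fun i hi => ?_
  rw [cast_card_filter_powersetCard_subset (singleton_subset_iff.2 hi)]
  simp

theorem cast_card_filter_powersetCard_pair_subset {s : Finset α} {i j : α} (hi : i ∈ s)
    (hj : j ∈ s) (r : ℕ) :
    (#{J ∈ powersetCard r s | {i, j} ⊆ J} : ℝ)
      = (#s).choose r * r / #s * (if i = j then 1 else ((r : ℝ) - 1) / (#s - 1)) := by
  rw [cast_card_filter_powersetCard_subset (insert_subset hi (singleton_subset_iff.2 hj))]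
  split_ifs with hij
  · subst hij
    simp
  · have hs : (2 : ℝ) ≤ #s := by exact_mod_cast one_lt_card.2 ⟨i, hi, j, hj, hij⟩
    have hs0 : (#s : ℝ) ≠ 0 := by positivity
    have hs1 : (#s : ℝ) - 1 ≠ 0 := by linarith
    rw [card_pair hij]
    push_cast [Nat.cast_choose_two]
    field_simp

theorem sum_powersetCard_sum_sq (s : Finset α) (r : ℕ) (f : α → ℝ) :
    ∑ J ∈ powersetCard r s, (∑ i ∈ J, f i) ^ 2
      = (#s).choose r * r / #s *
          (((r : ℝ) - 1) / (#s - 1) * (∑ i ∈ s, f i) ^ 2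
            + (1 - ((r : ℝ) - 1) / (#s - 1)) * ∑ i ∈ s, f i ^ 2) := by
  have hsq : ∀ J ∈ powersetCard r s, (∑ i ∈ J, f i) ^ 2
      = ∑ x ∈ s ×ˢ s with {x.1, x.2} ⊆ J, f x.1 * f x.2 := fun J hJ => by
    have hJs := (mem_powersetCard.1 hJ).1
    have hpairs : ({x ∈ s ×ˢ s | {x.1, x.2} ⊆ J} : Finset (α × α)) = J ×ˢ J := by
      ext x
      simp only [mem_filter, mem_product, insert_subset_iff, singleton_subset_iff]
      exact ⟨And.right, fun h => ⟨⟨hJs h.1, hJs h.2⟩, h⟩⟩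
    rw [hpairs, sum_product, sq, sum_mul_sum]
  set c : ℝ := ((r : ℝ) - 1) / (#s - 1)
  rw [sum_congr rfl hsq, sum_powersetCard_sum_filter_subset]
  calc ∑ x ∈ s ×ˢ s, (#{J ∈ powersetCard r s | {x.1, x.2} ⊆ J} : ℝ) * (f x.1 * f x.2)
      = ∑ x ∈ s ×ˢ s, (#s).choose r * r / #s *
          (c * (f x.1 * f x.2) + (1 - c) * (if x.1 = x.2 then f x.1 * f x.2 else 0)) := by
        refine sum_congr rfl fun x hx => ?_
        rw [mem_product] at hx
        rw [cast_card_filter_powersetCard_pair_subset hx.1 hx.2]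
        split_ifs <;> ring
    _ = _ := by
        rw [← mul_sum, sum_add_distrib, ← mul_sum, ← mul_sum, sum_product, sum_product,
          ← sum_mul_sum, ← sq]
        simp only [sum_ite_eq, sum_ite_mem, inter_self, ← sq]

noncomputable def heldOutError (Y : α → ℝ) (s J : Finset α) : ℝ :=
  ∑ j ∈ s \ J, (Y j - (∑ i ∈ J, Y i) / #J) ^ 2

noncomputable def heldOutFactor (k r : ℕ) : ℝ :=
  (k - r) * (r + 1) / (r * k * (k - 1))

theorem heldOutError_eq {s J : Finset α} (hJ : J ⊆ s) (Y : α → ℝ) :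
    heldOutError Y s J
      = ∑ i ∈ s, Y i ^ 2 - ∑ i ∈ J, Y i ^ 2 - 2 / #J * (∑ i ∈ s, Y i) * ∑ i ∈ J, Y i
        + (2 / #J + (#s - #J) / #J ^ 2) * (∑ i ∈ J, Y i) ^ 2 := by
  have hexpand : ∀ j ∈ s \ J, (Y j - (∑ i ∈ J, Y i) / #J) ^ 2
      = Y j ^ 2 - 2 * ((∑ i ∈ J, Y i) / #J) * Y j + ((∑ i ∈ J, Y i) / #J) ^ 2 :=
    fun _ _ => by ring
  rw [heldOutError, sum_congr rfl hexpand, sum_add_distrib, sum_sub_distrib, ← mul_sum,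
    sum_sdiff_eq_sub hJ, sum_sdiff_eq_sub hJ, sum_const, nsmul_eq_mul, card_sdiff_of_subset hJ,
    Nat.cast_sub (card_le_card hJ)]
  ring

theorem sum_powersetCard_heldOutError {s : Finset α} (hs : 2 ≤ #s) {r : ℕ} (hr : 1 ≤ r)
    (Y : α → ℝ) :
    ∑ J ∈ powersetCard r s, heldOutError Y s J
      = (#s).choose r * heldOutFactor #s r * (#s * ∑ i ∈ s, Y i ^ 2 - (∑ i ∈ s, Y i) ^ 2) := by
  have hs' : (2 : ℝ) ≤ #s := by exact_mod_cast hs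
  have hs1 : (#s : ℝ) - 1 ≠ 0 := by linarith
  have hcard : ∀ J ∈ powersetCard r s, heldOutError Y s J
      = ∑ i ∈ s, Y i ^ 2 - ∑ i ∈ J, Y i ^ 2 - 2 / r * (∑ i ∈ s, Y i) * ∑ i ∈ J, Y i
        + (2 / r + (#s - r) / r ^ 2) * (∑ i ∈ J, Y i) ^ 2 := fun J hJ => by
    obtain ⟨hJs, rfl⟩ := mem_powersetCard.1 hJ
    exact heldOutError_eq hJs Y
  rw [sum_congr rfl hcard, sum_add_distrib, sum_sub_distrib, sum_sub_distrib, sum_const,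
    card_powersetCard, nsmul_eq_mul, ← mul_sum, ← mul_sum, sum_powersetCard_sum,
    sum_powersetCard_sum, sum_powersetCard_sum_sq, heldOutFactor]
  field_simp
  ring

end Subsets

/-- The probability that a uniform `(N - p)`-subset of an `N`-set meets a fixed `k`-subset in
exactly `r` points. -/
noncomputable def hypergeomWeight (N p k r : ℕ) : ℝ :=
  (N - p).choose r * (if r ≤ k then (p.choose (k - r) : ℝ) else 0) / N.choose k

theorem choose_mul_hypergeomWeight {N p k r : ℕ} (hpN : p ≤ N) (hkN : k ≤ N) (hrk : r ≤ k) :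
    N.choose p * hypergeomWeight N p k r
      = ((if r ≤ N - p then (N - k).choose (N - p - r) else 0 : ℕ) : ℝ) * k.choose r := by
  have hNk : (N.choose k : ℝ) ≠ 0 := by exact_mod_cast (Nat.choose_pos hkN).ne'
  rw [hypergeomWeight, if_pos hrk, mul_div_assoc', div_eq_iff hNk]
  split_ifs with hrm
  · have h := choose_mul_choose_mul_choose_sub_comm (n := N) hrk hrm
    rw [Nat.sub_sub_self hpN, Nat.choose_symm hpN] at h
    norm_cast
    linarith
  · rw [Nat.choose_eq_zero_of_lt (not_le.1 hrm)]
    simp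

theorem Vcoef_eq_sum {N p k : ℕ} (hkN : k ≤ N) (e : ℤ) :
    Vcoef N p k e = ∑ r ∈ Icc 1 k, hypergeomWeight N p k r * r ^ e := by
  rw [Vcoef, ← sum_subset (Icc_subset_Icc_right hkN) fun r hr hrk => ?_]
  · exact sum_congr rfl fun r _ => by rw [hypergeomWeight]; ring
  · rw [if_neg fun h => hrk (mem_Icc.2 ⟨(mem_Icc.1 hr).1, h⟩)]
    simp

theorem Acoef_eq {N p k : ℕ} (hk : 2 ≤ k) (hkN : k ≤ N) :
    Acoef N p k = (k - 1) * ∑ r ∈ Icc 1 k, hypergeomWeight N p k r * heldOutFactor k r := by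
  have hk' : (2 : ℝ) ≤ k := by exact_mod_cast hk
  have hk1 : (k : ℝ) - 1 ≠ 0 := by linarith
  simp only [Acoef, Vcoef_eq_sum hkN, sum_mul, sum_div, mul_sum, ← sum_sub_distrib,
    ← sum_add_distrib]
  refine sum_congr rfl fun r hr => ?_
  have hr0 : (r : ℝ) ≠ 0 := Nat.cast_ne_zero.2 (by have := (mem_Icc.1 hr).1; omega)
  rw [heldOutFactor, zpow_zero, zpow_one, zpow_neg_one]
  field_simp
  ring

theorem Bcoef_eq {N p k : ℕ} (hk : 2 ≤ k) (hkN : k ≤ N) :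
    Bcoef N p k = -∑ r ∈ Icc 1 k, hypergeomWeight N p k r * heldOutFactor k r := by
  simp only [Bcoef, Vcoef_eq_sum hkN, sum_mul, sum_div, ← sum_neg_distrib, ← sum_sub_distrib,
    ← sum_add_distrib]
  refine sum_congr rfl fun r hr => ?_
  obtain ⟨hr1, hrk⟩ := mem_Icc.1 hr
  rw [heldOutFactor, zpow_zero, zpow_one, zpow_neg_one]
  rcases hk.lt_or_eq with hk3 | rfl
  · have hk' : (3 : ℝ) ≤ k := by exact_mod_cast hk3
    rw [if_pos (show 3 ≤ k from hk3)]
    field_simp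
    ring
  · -- for `k = 2` the summands of `Bcoef` agree with the generic ones only because `r ∈ {1, 2}`
    interval_cases r
    · norm_num
      ring
    · norm_num

section Traces

variable {β : Type*} [DecidableEq β] [Fintype β]

theorem card_filter_powersetCard_inter_eq {s J : Finset β} (hJ : J ⊆ s) (m : ℕ) :
    #{It ∈ powersetCard m univ | It ∩ s = J}
      = if #J ≤ m then (#sᶜ).choose (m - #J) else 0 := by
  split_ifs with hJm
  · rw [← card_powersetCard]
    refine card_bij' (fun It _ => It \ s) (fun K _ => J ∪ K) ?_ ?_ ?_ ?_
    · intro It hIt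
      rw [mem_filter, mem_powersetCard_univ] at hIt
      rw [mem_powersetCard, ← hIt.1, ← hIt.2, ← card_sdiff_add_card_inter It s,
        Nat.add_sub_cancel]
      exact ⟨fun x hx => mem_compl.2 (mem_sdiff.1 hx).2, rfl⟩
    · intro K hK
      rw [mem_powersetCard] at hK
      have hdisj : Disjoint J K :=
        disjoint_of_subset_left hJ (subset_compl_iff_disjoint_left.1 hK.1)
      rw [mem_filter, mem_powersetCard_univ, card_union_of_disjoint hdisj, hK.2]
      refine ⟨by omega, ?_⟩
      rw [union_inter_distrib_right, inter_eq_left.2 hJ,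
        disjoint_iff_inter_eq_empty.1 (subset_compl_iff_disjoint_right.1 hK.1), union_empty]
    · intro It hIt
      rw [← (mem_filter.1 hIt).2, union_comm, sdiff_union_inter]
    · intro K hK
      rw [union_sdiff_distrib, sdiff_eq_empty_iff_subset.2 hJ, empty_union,
        sdiff_eq_self_of_disjoint (subset_compl_iff_disjoint_right.1 (mem_powersetCard.1 hK).1)]
  · refine card_eq_zero.2 (filter_eq_empty_iff.2 fun It hIt hJIt => hJm ?_)
    rw [← (mem_powersetCard.1 hIt).2, ← hJIt]
    exact card_le_card inter_subset_left

theorem sum_powersetCard_univ_inter (s : Finset β) (m : ℕ) (F : Finset β → ℝ) :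
    ∑ It ∈ powersetCard m univ, F (It ∩ s)
      = ∑ r ∈ range (#s + 1),
          ((if r ≤ m then (#sᶜ).choose (m - r) else 0 : ℕ) : ℝ) * ∑ J ∈ powersetCard r s, F J := by
  rw [← sum_fiberwise_of_maps_to (g := (· ∩ s)) (t := s.powerset)
    (fun It _ => mem_powerset.2 inter_subset_right), sum_powerset]
  refine sum_congr rfl fun r _ => ?_
  rw [mul_sum]
  refine sum_congr rfl fun J hJ => ?_
  obtain ⟨hJs, rfl⟩ := mem_powersetCard.1 hJ
  rw [sum_congr rfl fun It hIt => congrArg F (mem_filter.1 hIt).2, sum_const, nsmul_eq_mul,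
    card_filter_powersetCard_inter_eq hJs]

theorem sum_powersetCard_heldOutError_inter {s : Finset β} {p : ℕ} (hp : 1 ≤ p) (hps : p < #s)
    (Y : β → ℝ) :
    ∑ It ∈ powersetCard (Fintype.card β - p) univ, heldOutError Y s (It ∩ s)
      = (Fintype.card β).choose p *
          ((Acoef (Fintype.card β) p #s - Bcoef (Fintype.card β) p #s) * ∑ i ∈ s, Y i ^ 2
            + Bcoef (Fintype.card β) p #s * (∑ i ∈ s, Y i) ^ 2) := by
  set N := Fintype.card β
  have hkN : #s ≤ N := card_le_univ s
  have hk : 2 ≤ #s := by omega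
  have hpN : p ≤ N := by omega
  rw [Acoef_eq hk hkN, Bcoef_eq hk hkN, sum_powersetCard_univ_inter, card_compl]
  calc _ = ∑ r ∈ Icc 1 #s, N.choose p * hypergeomWeight N p #s r * heldOutFactor #s r *
          (#s * ∑ i ∈ s, Y i ^ 2 - (∑ i ∈ s, Y i) ^ 2) := by
        rw [← sum_subset (s₁ := Icc 1 #s)
          (fun r hr => mem_range.2 (by have := (mem_Icc.1 hr).2; omega)) fun r hrs hr => ?_]
        · refine sum_congr rfl fun r hr => ?_
          obtain ⟨hr1, hrk⟩ := mem_Icc.1 hr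
          rw [sum_powersetCard_heldOutError hk hr1, choose_mul_hypergeomWeight hpN hkN hrk]
          ring
        · obtain rfl : r = 0 := by
            simp only [mem_range, mem_Icc, not_and, not_le] at hrs hr
            omega
          rw [if_pos (Nat.zero_le _), Nat.choose_eq_zero_of_lt (by omega)]
          simp
    _ = _ := by
        simp_rw [← sum_mul, mul_assoc (N.choose p : ℝ), ← mul_sum]
        ring

end Traces

theorem sum_sq_sub_pred_eq_sum_heldOutError (c : Fin n → ι) (Y : Fin n → ℝ)
    (It : Finset (Fin n)) :
    ∑ j ∈ univ \ It, (Y j - pred c Y It j) ^ 2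
      = ∑ b : ι, heldOutError Y (blockOf c b) (It ∩ blockOf c b) := by
  rw [← sum_fiberwise (univ \ It) c]
  refine sum_congr rfl fun b _ => ?_
  have hval : {j ∈ univ \ It | c j = b} = blockOf c b \ (It ∩ blockOf c b) := by
    ext j
    simp only [blockOf, mem_filter, mem_sdiff, mem_inter, mem_univ, true_and]
    tauto
  rw [hval, heldOutError]
  refine sum_congr rfl fun j hj => ?_
  have hjb : c j = b := (mem_filter.1 (mem_sdiff.1 hj).1).2
  have htrain : {i ∈ It | c i = c j} = It ∩ blockOf c b := by
    ext i
    simp [blockOf, hjb]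
  rw [pred, htrain]

theorem lpo_closed_form_general (c : Fin n → ι)
    (p : ℕ) (hp1 : 1 ≤ p) (hp2 : ∀ b : ι, p < (blockOf c b).card)
    (Y : Fin n → ℝ) :
    lpoRisk c Y p
      = ∑ b : ι, (p : ℝ)⁻¹ *
          ((Acoef n p (blockOf c b).card - Bcoef n p (blockOf c b).card) *
              (∑ i ∈ blockOf c b, Y i ^ 2)
            + Bcoef n p (blockOf c b).card * (∑ i ∈ blockOf c b, Y i) ^ 2) := by
  have hblock (b : ι) :
      (n.choose p : ℝ)⁻¹ * ∑ It ∈ powersetCard (n - p) univ,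
          heldOutError Y (blockOf c b) (It ∩ blockOf c b)
        = (Acoef n p (blockOf c b).card - Bcoef n p (blockOf c b).card) *
              (∑ i ∈ blockOf c b, Y i ^ 2)
            + Bcoef n p (blockOf c b).card * (∑ i ∈ blockOf c b, Y i) ^ 2 := by
    have hpn : p ≤ n := (hp2 b).le.trans (card_le_univ _ |>.trans_eq (Fintype.card_fin n))
    have h := sum_powersetCard_heldOutError_inter hp1 (hp2 b) Y
    rw [Fintype.card_fin] at h
    rw [h, inv_mul_cancel_left₀ (by exact_mod_cast (Nat.choose_pos hpn).ne')]
  calc lpoRisk c Y p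
      = ∑ b : ι, (p : ℝ)⁻¹ * ((n.choose p : ℝ)⁻¹ * ∑ It ∈ powersetCard (n - p) univ,
          heldOutError Y (blockOf c b) (It ∩ blockOf c b)) := by
        simp only [lpoRisk, sum_sq_sub_pred_eq_sum_heldOutError, mul_sum]
        rw [sum_comm]
        exact sum_congr rfl fun _ _ => sum_congr rfl fun _ _ => mul_left_comm _ _ _
    _ = _ := by simp only [hblock]

/-- **Closed-form formula for the leave-`p`-out estimator of the risk of a
regressogram** (Theorem 1).  If every block of the partition `c` has at least two
elements and `1 ≤ p < min_λ n_λ`, then for arbitrary real numbers `Y₁, …, Yₙ`,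
`R̂_p = ∑_{λ∈Λ} p⁻¹ [(A_λ − B_λ) S_{λ,2} + B_λ S_{λ,1}²]`. -/
theorem lpo_closed_form (hn : 2 ≤ n) (c : Fin n → ι)
    (hblocks : ∀ b : ι, 2 ≤ (blockOf c b).card)
    (p : ℕ) (hp1 : 1 ≤ p) (hp2 : ∀ b : ι, p < (blockOf c b).card)
    (Y : Fin n → ℝ) :
    lpoRisk c Y p
      = ∑ b : ι, (p : ℝ)⁻¹ *
          ((Acoef n p (blockOf c b).card - Bcoef n p (blockOf c b).card) *
              (∑ i ∈ blockOf c b, Y i ^ 2)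
            + Bcoef n p (blockOf c b).card * (∑ i ∈ blockOf c b, Y i) ^ 2) :=
  lpo_closed_form_general c p hp1 hp2 Y

end LpoClosedForm
end

section
/- Exact expectation of the leave-one-out risk estimator of a regressogram: in the fixed-design heteroscedastic regression model, let Λ be a partition of {1,…,n} into blocks λ with n_λ := card(λ) ≥ 2. Then the leave-one-out estimator R̂_1 := n^{-1} Σ_{j=1}^n (Y_j − mean{Y_i : i ∈ λ(j), i ≠ j})², where λ(j) is the block containing j, satisfies E[R̂_1] = n^{-1} Σ_{λ∈Λ} [ (n_λ/(n_λ−1))² Σ_{i∈λ} (s(t_i) − s̄_λ)² + (n_λ/(n_λ−1)) Σ_{i∈λ} σ(t_i)² ], where s̄_λ := n_λ^{-1} Σ_{i∈λ} s(t_i). -/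
/-!
In a block `B` of size `m ≥ 2`, the leave-one-out residual `Y j - looPred c Y j` equals
`m/(m-1)` times the ordinary residual `Y j - Ȳ_B = ∑_{i∈B} (δᵢⱼ - 1/m) Y i`. As the noises are
independent, centered and of unit variance, its second moment is the squared bias
`(s(tⱼ) - s̄_B)²` plus `∑_{i∈B} (δᵢⱼ - 1/m)² σ(tᵢ)²`. Summed over `j ∈ B` the latter gives
`(1 - 1/m) ∑_{i∈B} σ(tᵢ)²`, and `(m/(m-1))² (1 - 1/m) = m/(m-1)`.
-/

open MeasureTheory ProbabilityTheory Finset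

namespace LooExpectation

variable {n : ℕ} {ι : Type*} [Fintype ι] [DecidableEq ι]

def blockOf (c : Fin n → ι) (b : ι) : Finset (Fin n) :=
  Finset.univ.filter (fun i => c i = b)

noncomputable def looPred (c : Fin n → ι) (Y : Fin n → ℝ) (j : Fin n) : ℝ :=
  (∑ i ∈ (blockOf c (c j)).erase j, Y i) / (((blockOf c (c j)).erase j).card : ℝ)

section Centering

variable {α : Type*} [DecidableEq α]

theorem sub_sum_erase_div_card {B : Finset α} {j : α} (hj : j ∈ B) (hB : 2 ≤ #B) (y : α → ℝ) :
    y j - (∑ i ∈ B.erase j, y i) / #(B.erase j)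
      = #B / (#B - 1) * (y j - (∑ i ∈ B, y i) / #B) := by
  have hm : (2 : ℝ) ≤ #B := by exact_mod_cast hB
  have hm1 : (#B : ℝ) - 1 ≠ 0 := by linarith
  rw [sum_erase_eq_sub hj, card_erase_of_mem hj, Nat.cast_sub (by omega), Nat.cast_one]
  field_simp
  ring

theorem sub_sum_div_card_eq_sum_mul {B : Finset α} {j : α} (hj : j ∈ B) (y : α → ℝ) :
    y j - (∑ i ∈ B, y i) / #B = ∑ i ∈ B, ((if i = j then 1 else 0) - 1 / #B) * y i := by
  simp [sub_mul, sum_sub_distrib, hj, div_eq_inv_mul, mul_sum]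

theorem sum_sum_sq_sub_inv_card_mul (B : Finset α) (a : α → ℝ) :
    ∑ j ∈ B, ∑ i ∈ B, ((if i = j then 1 else 0) - 1 / #B) ^ 2 * a i
      = (1 - 1 / #B) * ∑ i ∈ B, a i := by
  rw [sum_comm, mul_sum]
  refine sum_congr rfl fun i hi => ?_
  have hm : (#B : ℝ) ≠ 0 := by exact_mod_cast (card_pos.2 ⟨i, hi⟩).ne'
  have hsq : ∀ j, ((if i = j then 1 else 0) - 1 / (#B : ℝ)) ^ 2
      = (if i = j then 1 - 2 / (#B : ℝ) else 0) + 1 / #B ^ 2 := fun j => by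
    split_ifs <;> field_simp <;> ring
  rw [← sum_mul, sum_congr rfl fun j _ => hsq j, sum_add_distrib, sum_ite_eq, if_pos hi,
    sum_const, nsmul_eq_mul]
  field_simp
  ring

end Centering

section SecondMoment

variable {Ω α : Type*} [MeasurableSpace Ω] {μ : Measure Ω} [IsProbabilityMeasure μ]
  {ε : α → Ω → ℝ}

theorem integral_sq_const_add_sum_mul (hε : ∀ i, MemLp (ε i) 2 μ)
    (hindep : Pairwise fun i j => ε i ⟂ᵢ[μ] ε j)
    (hmean : ∀ i, ∫ ω, ε i ω ∂μ = 0) (hvar : ∀ i, ∫ ω, ε i ω ^ 2 ∂μ = 1)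
    (s : Finset α) (C : ℝ) (a : α → ℝ) :
    ∫ ω, (C + ∑ i ∈ s, a i * ε i ω) ^ 2 ∂μ = C ^ 2 + ∑ i ∈ s, a i ^ 2 := by
  have hterm : ∀ i, MemLp (fun ω => a i * ε i ω) 2 μ := fun i => (hε i).const_mul (a i)
  have hsum : MemLp (fun ω => ∑ i ∈ s, a i * ε i ω) 2 μ := memLp_finsetSum s fun i _ => hterm i
  have hmean_sum : ∫ ω, C + ∑ i ∈ s, a i * ε i ω ∂μ = C := by
    rw [integral_add (integrable_const C) (hsum.integrable one_le_two),
      integral_finsetSum s fun i _ => (hterm i).integrable one_le_two]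
    simp [integral_const_mul, hmean]
  have hvar_sum : Var[fun ω => ∑ i ∈ s, a i * ε i ω; μ] = ∑ i ∈ s, a i ^ 2 := by
    calc _ = ∑ i ∈ s, Var[fun ω => a i * ε i ω; μ] := by
          simpa only [sum_fn] using IndepFun.variance_sum (fun i _ => hterm i)
            fun i _ j _ hij => (hindep hij).comp (measurable_const_mul (a i))
              (measurable_const_mul (a j))
      _ = ∑ i ∈ s, a i ^ 2 := sum_congr rfl fun i _ => by
          rw [variance_const_mul, variance_eq_sub (hε i)]
          simp [hmean, hvar]
  have hX : MemLp (fun ω => C + ∑ i ∈ s, a i * ε i ω) 2 μ := (memLp_const C).add hsum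
  have hvar_eq := variance_eq_sub hX
  rw [variance_const_add hsum.1, hvar_sum] at hvar_eq
  simp only [Pi.pow_apply, hmean_sum] at hvar_eq
  linarith

variable [DecidableEq α]

theorem sum_integral_sq_sub_sum_erase_div_card (hε : ∀ i, MemLp (ε i) 2 μ)
    (hindep : Pairwise fun i j => ε i ⟂ᵢ[μ] ε j)
    (hmean : ∀ i, ∫ ω, ε i ω ∂μ = 0) (hvar : ∀ i, ∫ ω, ε i ω ^ 2 ∂μ = 1)
    (f g : α → ℝ) {B : Finset α} (hB : 2 ≤ #B) :
    ∑ j ∈ B, ∫ ω, (f j + g j * ε j ω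
        - (∑ i ∈ B.erase j, (f i + g i * ε i ω)) / #(B.erase j)) ^ 2 ∂μ
      = (#B / (#B - 1)) ^ 2 * ∑ i ∈ B, (f i - (∑ j ∈ B, f j) / #B) ^ 2
        + #B / (#B - 1) * ∑ i ∈ B, g i ^ 2 := by
  set w : α → α → ℝ := fun j i => (if i = j then 1 else 0) - 1 / #B
  have hres : ∀ j ∈ B, ∀ ω, f j + g j * ε j ω
        - (∑ i ∈ B.erase j, (f i + g i * ε i ω)) / #(B.erase j)
      = #B / (#B - 1) * ((f j - (∑ i ∈ B, f i) / #B) + ∑ i ∈ B, w j i * g i * ε i ω) := by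
    intro j hj ω
    rw [sub_sum_erase_div_card hj hB (fun i => f i + g i * ε i ω),
      sub_sum_div_card_eq_sum_mul hj (fun i => f i + g i * ε i ω),
      sub_sum_div_card_eq_sum_mul hj f, ← sum_add_distrib]
    simp only [w, mul_add, mul_assoc]
  have hm : (2 : ℝ) ≤ #B := by exact_mod_cast hB
  calc _ = ∑ j ∈ B, (#B / (#B - 1)) ^ 2
        * ((f j - (∑ i ∈ B, f i) / #B) ^ 2 + ∑ i ∈ B, w j i ^ 2 * g i ^ 2) := by
        refine sum_congr rfl fun j hj => ?_
        simp_rw [hres j hj, mul_pow, integral_const_mul]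
        rw [integral_sq_const_add_sum_mul hε hindep hmean hvar]
        simp_rw [mul_pow]
    _ = _ := by
        rw [← mul_sum, sum_add_distrib, sum_sum_sq_sub_inv_card_mul]
        field_simp

end SecondMoment

omit [Fintype ι] in
theorem looPred_of_mem {c : Fin n → ι} {b : ι} {j : Fin n} (hj : j ∈ blockOf c b)
    (Y : Fin n → ℝ) :
    looPred c Y j = (∑ i ∈ (blockOf c b).erase j, Y i) / #((blockOf c b).erase j) := by
  rw [looPred, (mem_filter.1 hj).2]

theorem expected_loo_risk_general
    {Ω : Type*} [MeasurableSpace Ω] (μ : Measure Ω) [IsProbabilityMeasure μ]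
    (t : Fin n → ℝ)
    (s σ : ℝ → ℝ)
    (ε : Fin n → Ω → ℝ)
    (hindep : iIndepFun ε μ)
    (hint1 : ∀ i, Integrable (ε i) μ)
    (hint2 : ∀ i, Integrable (fun ω => ε i ω ^ 2) μ)
    (hmean : ∀ i, ∫ ω, ε i ω ∂μ = 0) (hvar : ∀ i, ∫ ω, ε i ω ^ 2 ∂μ = 1)
    (Y : Fin n → Ω → ℝ) (hY : ∀ i ω, Y i ω = s (t i) + σ (t i) * ε i ω)
    (c : Fin n → ι) (hblocks : ∀ b : ι, 2 ≤ (blockOf c b).card) :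
    ∫ ω, (n : ℝ)⁻¹ * ∑ j : Fin n, (Y j ω - looPred c (fun i => Y i ω) j) ^ 2 ∂μ
      = (n : ℝ)⁻¹ * ∑ b : ι,
          ((((blockOf c b).card : ℝ) / (((blockOf c b).card : ℝ) - 1)) ^ 2 *
              ∑ i ∈ blockOf c b,
                (s (t i) -
                  (∑ j ∈ blockOf c b, s (t j)) / ((blockOf c b).card : ℝ)) ^ 2
            + (((blockOf c b).card : ℝ) / (((blockOf c b).card : ℝ) - 1)) *
                ∑ i ∈ blockOf c b, σ (t i) ^ 2) := by
  obtain rfl : Y = fun i ω => s (t i) + σ (t i) * ε i ω := funext fun i => funext (hY i)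
  have hε : ∀ i, MemLp (ε i) 2 μ := fun i => (memLp_two_iff_integrable_sq (hint1 i).1).2 (hint2 i)
  have hY : ∀ i, MemLp (fun ω => s (t i) + σ (t i) * ε i ω) 2 μ :=
    fun i => (memLp_const (s (t i))).add ((hε i).const_mul (σ (t i)))
  have hsq_int : ∀ j, Integrable (fun ω => (s (t j) + σ (t j) * ε j ω
      - looPred c (fun i => s (t i) + σ (t i) * ε i ω) j) ^ 2) μ := fun j => by
    simp only [looPred, div_eq_mul_inv]
    exact ((hY j).sub ((memLp_finsetSum _ fun i _ => hY i).mul_const _)).integrable_sq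
  rw [integral_const_mul, integral_finsetSum _ fun j _ => hsq_int j,
    ← sum_fiberwise univ c]
  congr 1
  refine sum_congr rfl fun b _ => ?_
  rw [← sum_integral_sq_sub_sum_erase_div_card hε (fun i j hij => hindep.indepFun hij) hmean hvar
    (fun i => s (t i)) (fun i => σ (t i)) (hblocks b)]
  refine sum_congr rfl fun j hj => ?_
  simp_rw [looPred_of_mem hj]

/-- **Exact expectation of the leave-one-out risk estimator of a regressogram.**
In the fixed-design heteroscedastic regression model `Y i = s (t i) + σ (t i) * ε i`
with `ε₁, …, εₙ` i.i.d., centered, of unit variance, if every block of the partition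
`c` has at least two elements, then
`E[R̂₁] = n⁻¹ ∑_λ [(n_λ/(n_λ−1))² ∑_{i∈λ} (s(tᵢ) − s̄_λ)² + (n_λ/(n_λ−1)) ∑_{i∈λ} σ(tᵢ)²]`. -/
theorem expected_loo_risk
    {Ω : Type*} [MeasurableSpace Ω] (μ : Measure Ω) [IsProbabilityMeasure μ]
    (hn : 0 < n)
    (t : Fin n → ℝ) (ht : StrictMono t) (ht01 : ∀ i, t i ∈ Set.Icc (0 : ℝ) 1)
    (s σ : ℝ → ℝ) (hσ : ∀ x, 0 ≤ σ x)
    (ε : Fin n → Ω → ℝ) (hmeas : ∀ i, Measurable (ε i))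
    (hindep : iIndepFun ε μ)
    (hident : ∀ i j, IdentDistrib (ε i) (ε j) μ μ)
    (hint1 : ∀ i, Integrable (ε i) μ)
    (hint2 : ∀ i, Integrable (fun ω => ε i ω ^ 2) μ)
    (hmean : ∀ i, ∫ ω, ε i ω ∂μ = 0) (hvar : ∀ i, ∫ ω, ε i ω ^ 2 ∂μ = 1)
    (Y : Fin n → Ω → ℝ) (hY : ∀ i ω, Y i ω = s (t i) + σ (t i) * ε i ω)
    (c : Fin n → ι) (hblocks : ∀ b : ι, 2 ≤ (blockOf c b).card) :
    ∫ ω, (n : ℝ)⁻¹ * ∑ j : Fin n, (Y j ω - looPred c (fun i => Y i ω) j) ^ 2 ∂μ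
      = (n : ℝ)⁻¹ * ∑ b : ι,
          ((((blockOf c b).card : ℝ) / (((blockOf c b).card : ℝ) - 1)) ^ 2 *
              ∑ i ∈ blockOf c b,
                (s (t i) -
                  (∑ j ∈ blockOf c b, s (t j)) / ((blockOf c b).card : ℝ)) ^ 2
            + (((blockOf c b).card : ℝ) / (((blockOf c b).card : ℝ) - 1)) *
                ∑ i ∈ blockOf c b, σ (t i) ^ 2) :=
  expected_loo_risk_general μ t s σ ε hindep hint1 hint2 hmean hvar Y hY c hblocks

end LooExpectation
end
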